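/- Let n ≥ 1, G = Δ × 𝔹ⁿ, and let α : G → G be a holomorphic map with α(0) = 0. Suppose w₀ ∈ ℂ with |w₀| = 1 and z⁰ ∈ ℂⁿ with ‖z⁰‖ = 1 are such that the derivative satisfies Dα(0)(w₀, z⁰) = (w₀, z⁰). Then α(w₀t, z⁰₁t, …, z⁰ₙt) = (w₀t, z⁰₁t, …, z⁰ₙt) for every t ∈ Δ; that is, α is the identity on the analytic disc t ↦ (w₀t, z⁰t). -/

import Mathlib

open Metric Set

noncomputable section

/-- `G = Δ × 𝔹ⁿ ⊆ ℂ × ℂⁿ`, the product of the unit disc and the unit ball. -/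
def diskBall (n : ℕ) : Set (ℂ × EuclideanSpace ℂ (Fin n)) :=
  (ball (0 : ℂ) 1) ×ˢ (ball (0 : EuclideanSpace ℂ (Fin n)) 1)

/-! With the sup norm on `ℂ × ℂⁿ`, `G` is the unit ball and `t ↦ t • (w₀, z⁰)` is an isometric
disc in it, so `β t = α (t • (w₀, z⁰))` is a holomorphic map from `Δ` into that ball with
`β 0 = 0` and `β' 0 = (w₀, z⁰)`. The product norm is not strictly convex, but each factor is, so
the equality case of the Schwarz lemma applies to each component of `β` separately: a component
with unit derivative at `0` is linear, hence `β t = t • (w₀, z⁰)`. -/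

theorem Complex.eqOn_smul_of_mapsTo_ball_of_hasDerivAt {E : Type*} [NormedAddCommGroup E]
    [NormedSpace ℂ E] [StrictConvexSpace ℝ E] {f : ℂ → E} {v : E}
    (hd : DifferentiableOn ℂ f (ball 0 1)) (h_maps : MapsTo f (ball 0 1) (closedBall 0 1))
    (h₀ : f 0 = 0) (hf : HasDerivAt f v 0) (hv : ‖v‖ = 1) :
    EqOn f (fun t ↦ t • v) (ball 0 1) := by
  have h_affine := Complex.affine_of_mapsTo_ball_of_norm_dslope_eq_div hd (by rwa [h₀])
    (mem_ball_self one_pos) (by rw [dslope_same, hf.deriv, hv, div_one])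
  intro t ht
  simpa [h₀, hf.deriv] using h_affine ht

theorem Complex.eqOn_smul_of_mapsTo_ball_prod_of_hasDerivAt {E F : Type*}
    [NormedAddCommGroup E] [NormedSpace ℂ E] [StrictConvexSpace ℝ E]
    [NormedAddCommGroup F] [NormedSpace ℂ F] [StrictConvexSpace ℝ F]
    {f : ℂ → E × F} {v : E} {w : F}
    (hd : DifferentiableOn ℂ f (ball 0 1)) (h_maps : MapsTo f (ball 0 1) (ball 0 1))
    (h₀ : f 0 = 0) (hf : HasDerivAt f (v, w) 0) (hv : ‖v‖ = 1) (hw : ‖w‖ = 1) :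
    EqOn f (fun t ↦ t • (v, w)) (ball 0 1) := by
  rw [← ball_prod_same] at h_maps
  have hfst := eqOn_smul_of_mapsTo_ball_of_hasDerivAt
    (differentiable_fst.comp_differentiableOn hd)
    (fun t ht ↦ ball_subset_closedBall (h_maps ht).1) (by simp [h₀])
    (hasFDerivAt_fst.comp_hasDerivAt 0 hf) hv
  have hsnd := eqOn_smul_of_mapsTo_ball_of_hasDerivAt
    (differentiable_snd.comp_differentiableOn hd)
    (fun t ht ↦ ball_subset_closedBall (h_maps ht).2) (by simp [h₀])
    (hasFDerivAt_snd.comp_hasDerivAt 0 hf) hw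
  exact fun t ht ↦ Prod.ext (hfst ht) (hsnd ht)

theorem diskBall_eq_ball (n : ℕ) : diskBall n = ball 0 1 :=
  ball_prod_same 0 0 1

theorem stmt_5_general (n : ℕ)
    (α : ℂ × EuclideanSpace ℂ (Fin n) → ℂ × EuclideanSpace ℂ (Fin n))
    (hα : DifferentiableOn ℂ α (diskBall n))
    (hmaps : MapsTo α (diskBall n) (diskBall n))
    (h0 : α 0 = 0)
    (w0 : ℂ) (hw0 : ‖w0‖ = 1)
    (z0 : EuclideanSpace ℂ (Fin n)) (hz0 : ‖z0‖ = 1)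
    (hfix : fderiv ℂ α 0 (w0, z0) = (w0, z0)) :
    ∀ t ∈ ball (0 : ℂ) 1, α (w0 * t, t • z0) = (w0 * t, t • z0) := by
  rw [diskBall_eq_ball] at hα hmaps
  have hdisc : MapsTo (fun t : ℂ ↦ t • (w0, z0)) (ball 0 1) (ball 0 1) := fun t ht ↦ by
    simpa [norm_smul, hw0, hz0] using ht
  have hα_deriv : HasFDerivAt α (fderiv ℂ α 0) ((0 : ℂ) • (w0, z0)) := by
    rw [zero_smul]
    exact (hα.differentiableAt (ball_mem_nhds 0 one_pos)).hasFDerivAt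
  have hlin := Complex.eqOn_smul_of_mapsTo_ball_prod_of_hasDerivAt
    (hα.comp (differentiable_id.smul_const _).differentiableOn hdisc) (hmaps.comp hdisc)
    (by rw [Function.comp_apply, zero_smul, h0])
    (by simpa [hfix] using
      hα_deriv.comp_hasDerivAt (0 : ℂ) ((hasDerivAt_id' (0 : ℂ)).smul_const (w0, z0)))
    hw0 hz0
  intro t ht
  simpa [mul_comm] using hlin ht

theorem stmt_5 (n : ℕ) (hn : 1 ≤ n)
    (α : ℂ × EuclideanSpace ℂ (Fin n) → ℂ × EuclideanSpace ℂ (Fin n))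
    (hα : DifferentiableOn ℂ α (diskBall n))
    (hmaps : MapsTo α (diskBall n) (diskBall n))
    (h0 : α 0 = 0)
    (w0 : ℂ) (hw0 : ‖w0‖ = 1)
    (z0 : EuclideanSpace ℂ (Fin n)) (hz0 : ‖z0‖ = 1)
    (hfix : fderiv ℂ α 0 (w0, z0) = (w0, z0)) :
    ∀ t ∈ ball (0 : ℂ) 1, α (w0 * t, t • z0) = (w0 * t, t • z0) :=
  stmt_5_general n α hα hmaps h0 w0 hw0 z0 hz0 hfix
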